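/- Let r and s be duplicate-free TP relations over the same fact type and let op ∈ {∪ᵀᵖ, ∩ᵀᵖ, −ᵀᵖ}. Then the result relation r opᵀᵖ s is itself duplicate-free: any two distinct tuples of r opᵀᵖ s either have different facts or disjoint time intervals. -/

import Mathlib

/-- Boolean lineage formulas over a type `V` of tuple identifiers. -/
inductive LineageExpr (V : Type) : Type where
  | var : V → LineageExpr V
  | not : LineageExpr V → LineageExpr V
  | and : LineageExpr V → LineageExpr V → LineageExpr V
  | or  : LineageExpr V → LineageExpr V → LineageExpr V

/-- A TP tuple: a fact, a lineage expression and a half-open time interval `[ts, te)`. -/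
structure TPTuple (F V : Type) where
  fact : F
  lam : LineageExpr V
  ts : ℕ
  te : ℕ

/-- Time point `t` belongs to the interval of tuple `u`. -/
def TPTuple.memT {F V : Type} (t : ℕ) (u : TPTuple F V) : Prop :=
  u.ts ≤ t ∧ t < u.te

/-- All tuples of the relation have nonempty intervals (`Ts < Te`). -/
def WF {F V : Type} (r : Set (TPTuple F V)) : Prop :=
  ∀ u ∈ r, u.ts < u.te

/-- A TP relation is duplicate-free iff any two distinct tuples have
different facts or disjoint time intervals. -/
def DupFree {F V : Type} (r : Set (TPTuple F V)) : Prop :=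
  ∀ u ∈ r, ∀ u' ∈ r, u ≠ u' →
    u.fact ≠ u'.fact ∨ ∀ t : ℕ, ¬ (TPTuple.memT t u ∧ TPTuple.memT t u')

open Classical in
/-- `lamAt r f t` = the lineage `λ^{r,f}_t` of the (for duplicate-free `r`, unique)
tuple of `r` with fact `f` whose interval contains `t`; `none` if no such tuple exists. -/
noncomputable def lamAt {F V : Type} (r : Set (TPTuple F V)) (f : F) (t : ℕ) :
    Option (LineageExpr V) :=
  if h : ∃ u, u ∈ r ∧ u.fact = f ∧ u.ts ≤ t ∧ t < u.te then some h.choose.lam else none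
/-- The three TP set operations. -/
inductive TPOp : Type
  | inter
  | diff
  | union

/-- The filter condition `φ_op` on pairs of possibly-null lineages. -/
def opFilter {V : Type} : TPOp → Option (LineageExpr V) → Option (LineageExpr V) → Prop
  | .inter, l1, l2 => l1 ≠ none ∧ l2 ≠ none
  | .diff,  l1, _  => l1 ≠ none
  | .union, l1, l2 => l1 ≠ none ∨ l2 ≠ none

/-- The lineage-concatenation function `g_op` (`none` when undefined):
`and`, `andNot` and `or` respectively. -/
def gOp {V : Type} :
    TPOp → Option (LineageExpr V) → Option (LineageExpr V) → Option (LineageExpr V)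
  | .inter, some a, some b => some (.and a b)
  | .inter, _, _ => none
  | .diff, some a, none => some a
  | .diff, some a, some b => some (.and a (.not b))
  | .diff, none, _ => none
  | .union, some a, none => some a
  | .union, none, some b => some b
  | .union, some a, some b => some (.or a b)
  | .union, none, none => none

/-- The result `r opᵀᵖ s` of a TP set operation: tuples `(f, λ, [ts,te))` such that
on all of `[ts,te)` the pair of input lineages is constant, satisfies `φ_op` and
yields `λ` via `g_op`, and the interval is maximal. -/
def opResult {F V : Type} (op : TPOp) (r s : Set (TPTuple F V)) : Set (TPTuple F V) :=
  {u | u.ts < u.te ∧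
    ∃ l1 l2 : Option (LineageExpr V),
      opFilter op l1 l2 ∧
      gOp op l1 l2 = some u.lam ∧
      (∀ t : ℕ, u.ts ≤ t → t < u.te → lamAt r u.fact t = l1 ∧ lamAt s u.fact t = l2) ∧
      (u.ts = 0 ∨
        ¬ (opFilter op (lamAt r u.fact (u.ts - 1)) (lamAt s u.fact (u.ts - 1)) ∧
           gOp op (lamAt r u.fact (u.ts - 1)) (lamAt s u.fact (u.ts - 1)) = some u.lam)) ∧
      ¬ (opFilter op (lamAt r u.fact u.te) (lamAt s u.fact u.te) ∧
         gOp op (lamAt r u.fact u.te) (lamAt s u.fact u.te) = some u.lam)}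

/-!
Fix a fact `f`. For each lineage `λ`, the time points at which `r opᵀᵖ s` produces `λ` for
`f` form a fixed subset of `ℕ`, and by the maximality clause the interval of every result
tuple `(f, λ, T)` is a maximal run of consecutive points of that subset. Two result tuples
with fact `f` whose intervals share a time point produce the same lineage there, so they are
maximal runs of the same subset through a common point, hence equal.
-/

def IsMaxRun (P : ℕ → Prop) (a b : ℕ) : Prop :=
  (∀ t, a ≤ t → t < b → P t) ∧ (a = 0 ∨ ¬ P (a - 1)) ∧ ¬ P b

namespace IsMaxRun

variable {P : ℕ → Prop} {a b a' b' t : ℕ}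

theorem le_start (h : IsMaxRun P a b) (h' : IsMaxRun P a' b') (hab' : a' ≤ b) : a' ≤ a := by
  by_contra! hlt
  rcases h'.2.1 with h0 | hnot
  · omega
  · exact hnot (h.1 _ (by omega) (by omega))

theorem end_le (h : IsMaxRun P a b) (h' : IsMaxRun P a' b') (hab' : a ≤ b') : b ≤ b' := by
  by_contra! hlt
  exact h'.2.2 (h.1 _ hab' hlt)

theorem eq_of_mem (h : IsMaxRun P a b) (h' : IsMaxRun P a' b')
    (ht : a ≤ t ∧ t < b) (ht' : a' ≤ t ∧ t < b') : a = a' ∧ b = b' := by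
  have := h.le_start h' (by omega)
  have := h'.le_start h (by omega)
  have := h.end_le h' (by omega)
  have := h'.end_le h (by omega)
  omega

end IsMaxRun

section

variable {F V : Type}

def ProducesAt (op : TPOp) (r s : Set (TPTuple F V)) (f : F) (t : ℕ) (l : LineageExpr V) :
    Prop :=
  opFilter op (lamAt r f t) (lamAt s f t) ∧ gOp op (lamAt r f t) (lamAt s f t) = some l

theorem ProducesAt.lam_eq {op : TPOp} {r s : Set (TPTuple F V)} {f : F} {t : ℕ}
    {l l' : LineageExpr V} (h : ProducesAt op r s f t l) (h' : ProducesAt op r s f t l') :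
    l = l' :=
  Option.some.inj (h.2.symm.trans h'.2)

theorem isMaxRun_of_mem_opResult {op : TPOp} {r s : Set (TPTuple F V)} {u : TPTuple F V}
    (hu : u ∈ opResult op r s) :
    IsMaxRun (fun t => ProducesAt op r s u.fact t u.lam) u.ts u.te := by
  obtain ⟨-, l1, l2, hfilter, hg, hconst, hstart, hend⟩ := hu
  refine ⟨fun t h1 h2 => ?_, hstart, hend⟩
  obtain ⟨hr, hs⟩ := hconst t h1 h2
  exact ⟨hr ▸ hs ▸ hfilter, hr ▸ hs ▸ hg⟩

end

theorem tp_opResult_dupFree_general {F V : Type}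
    (r s : Set (TPTuple F V))
    (op : TPOp) :
    DupFree (opResult op r s) := by
  intro u hu u' hu' hne
  refine or_iff_not_imp_left.2 fun hfact t ⟨ht, ht'⟩ => hne ?_
  rw [not_ne_iff] at hfact
  have hrun := isMaxRun_of_mem_opResult hu
  have hrun' := isMaxRun_of_mem_opResult hu'
  rw [← hfact] at hrun'
  have hlam : u.lam = u'.lam := (hrun.1 t ht.1 ht.2).lam_eq (hrun'.1 t ht'.1 ht'.2)
  rw [← hlam] at hrun'
  obtain ⟨hts, hte⟩ := hrun.eq_of_mem hrun' ht ht'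
  cases u
  cases u'
  simp_all

/-- For duplicate-free TP relations `r` and `s` and any TP set
operation `op`, the result `r opᵀᵖ s` is itself duplicate-free: any two distinct
tuples of the result have different facts or disjoint time intervals. -/
theorem tp_opResult_dupFree {F V : Type}
    (r s : Set (TPTuple F V)) (hrfin : r.Finite) (hsfin : s.Finite)
    (hrWF : WF r) (hsWF : WF s) (hrDF : DupFree r) (hsDF : DupFree s)
    (op : TPOp) :
    DupFree (opResult op r s) :=
  tp_opResult_dupFree_general r s op
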